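/- Given any binary parse tree over a sentence, the maximal left-branching heuristic yields a partition of the words: every word belongs to exactly one maximal left-branching subtree, so the induced chunks partition the sentence (Theorem 1 of the paper). -/
import Mathlib


/-- A full binary tree: every node is a leaf or has exactly two children. -/
inductive BTree where
  | leaf : BTree
  | node : BTree → BTree → BTree
deriving DecidableEq

namespace BTree

/-- Number of leaves (words spanned). -/
def leafCount : BTree → ℕ
  | leaf => 1
  | node l r => l.leafCount + r.leafCount

/-- A tree is left-branching if every internal node's right child is a leaf. -/
def LeftBranching : BTree → Prop
  | leaf => True
  | node l r => LeftBranching l ∧ r = leaf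

/-- Subtree at a given root-to-node path (`false` = go left, `true` = go right). -/
def subtreeAt : BTree → List Bool → Option BTree
  | t, [] => some t
  | leaf, _ :: _ => none
  | node l _, false :: p => l.subtreeAt p
  | node _ r, true :: p => r.subtreeAt p

/-- Number of leaves strictly to the left of the subtree at the given path. -/
def offset : BTree → List Bool → ℕ
  | _, [] => 0
  | leaf, _ :: _ => 0
  | node l _, false :: p => l.offset p
  | node l r, true :: p => l.leafCount + r.offset p

/-- The span of leaf indices covered by the subtree at path `p`. -/
def span (t : BTree) (p : List Bool) : Finset ℕ :=
  match t.subtreeAt p with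
  | some s => Finset.Ico (t.offset p) (t.offset p + s.leafCount)
  | none => ∅

/-- `p` is the position of a left-branching subtree of `t`. -/
def LBOcc (t : BTree) (p : List Bool) : Prop :=
  ∃ s, t.subtreeAt p = some s ∧ s.LeftBranching

/-- `p` is a maximal left-branching subtree of `t`: left-branching and not
properly contained (by leaf span) in any other left-branching subtree. -/
def MaxLB (t : BTree) (p : List Bool) : Prop :=
  t.LBOcc p ∧ ∀ q, t.LBOcc q → t.span p ⊆ t.span q → t.span p = t.span q

end BTree

namespace BTree

theorem leafCount_pos (t : BTree) : 0 < t.leafCount := by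
  induction t with
  | leaf => simp [leafCount]
  | node l r ihl ihr => simp [leafCount]; omega

theorem span_bound : ∀ (t : BTree) (p : List Bool) (s : BTree),
    t.subtreeAt p = some s → t.offset p + s.leafCount ≤ t.leafCount := by
  intro t
  induction t with
  | leaf =>
    rintro (_ | ⟨b, p⟩) s hs
    · simp [subtreeAt] at hs; subst hs; simp [offset]
    · simp [subtreeAt] at hs
  | node l r ihl ihr =>
    rintro (_ | ⟨(_ | _), p⟩) s hs
    · simp [subtreeAt] at hs; subst hs; simp [offset]
    · simp [subtreeAt] at hs
      have := ihl p s hs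
      simp [offset, leafCount]; omega
    · simp [subtreeAt] at hs
      have := ihr p s hs
      simp [offset, leafCount]; omega

theorem nest : ∀ (t : BTree) (p q : List Bool) (sp sq : BTree),
    t.subtreeAt p = some sp → t.subtreeAt q = some sq →
    t.offset p + sp.leafCount ≤ t.offset q ∨
    t.offset q + sq.leafCount ≤ t.offset p ∨
    (t.offset q ≤ t.offset p ∧ t.offset p + sp.leafCount ≤ t.offset q + sq.leafCount) ∨
    (t.offset p ≤ t.offset q ∧ t.offset q + sq.leafCount ≤ t.offset p + sp.leafCount) := by
  intro t
  induction t with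
  | leaf =>
    rintro (_ | ⟨b, p⟩) q sp sq hp hq
    · simp [subtreeAt] at hp; subst hp
      have := span_bound leaf q sq hq
      simp [offset, leafCount] at *
      omega
    · simp [subtreeAt] at hp
  | node l r ihl ihr =>
    rintro (_ | ⟨bp, p⟩) (_ | ⟨bq, q⟩) sp sq hp hq
    · simp [subtreeAt] at hp hq; subst hp; subst hq; simp [offset]
    · simp [subtreeAt] at hp; subst hp
      have := span_bound (node l r) (bq :: q) sq hq
      simp [offset]
      omega
    · simp [subtreeAt] at hq; subst hq
      have := span_bound (node l r) (bp :: p) sp hp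
      simp [offset]
      omega
    · cases bp <;> cases bq <;> simp [subtreeAt] at hp hq
      · have := ihl p q sp sq hp hq
        simp [offset]; omega
      · have h1 := span_bound l p sp hp
        simp [offset]; omega
      · have h1 := span_bound l q sq hq
        simp [offset]; omega
      · have := ihr p q sp sq hp hq
        simp [offset]; omega

theorem leaf_path : ∀ (t : BTree) (i : ℕ), i < t.leafCount →
    ∃ p, t.subtreeAt p = some leaf ∧ t.offset p = i := by
  intro t
  induction t with
  | leaf =>
    intro i hi
    exact ⟨[], by simp [subtreeAt, offset, leafCount] at *; omega⟩
  | node l r ihl ihr =>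
    intro i hi
    simp [leafCount] at hi
    by_cases h : i < l.leafCount
    · obtain ⟨p, hp, ho⟩ := ihl i h
      exact ⟨false :: p, by simpa [subtreeAt], by simpa [offset]⟩
    · obtain ⟨p, hp, ho⟩ := ihr (i - l.leafCount) (by omega)
      exact ⟨true :: p, by simpa [subtreeAt], by simp [offset, ho]; omega⟩

theorem span_eq (t : BTree) (p : List Bool) (s : BTree) (hs : t.subtreeAt p = some s) :
    t.span p = Finset.Ico (t.offset p) (t.offset p + s.leafCount) := by
  simp [span, hs]

end BTree

/-- Theorem 1 of the paper: every word belongs to exactly one chunk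
(leaf span of a maximal left-branching subtree), so the chunks partition
the sentence. -/
theorem maxLB_chunks_partition (t : BTree) (i : ℕ) (hi : i < t.leafCount) :
    ∃! S : Finset ℕ, (∃ p, t.MaxLB p ∧ t.span p = S) ∧ i ∈ S := by
  classical
  -- any LB span containing i lies in the candidate finite set
  have hsub : ∀ (p : List Bool) (s : BTree), t.subtreeAt p = some s →
      t.span p ⊆ Finset.range t.leafCount := by
    intro p s hs
    rw [BTree.span_eq t p s hs]
    intro x hx
    simp only [Finset.mem_Ico] at hx
    have := BTree.span_bound t p s hs
    simp only [Finset.mem_range]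
    omega
  set 𝒮 : Finset (Finset ℕ) :=
    (Finset.range t.leafCount).powerset.filter
      (fun S => (∃ p, t.LBOcc p ∧ t.span p = S) ∧ i ∈ S) with h𝒮
  have mem𝒮 : ∀ (p : List Bool), t.LBOcc p → i ∈ t.span p → t.span p ∈ 𝒮 := by
    intro p hp hip
    obtain ⟨s, hs, hl⟩ := hp
    simp only [h𝒮, Finset.mem_filter, Finset.mem_powerset]
    exact ⟨hsub p s hs, ⟨p, ⟨s, hs, hl⟩, rfl⟩, hip⟩
  -- nonempty: the leaf at position i
  obtain ⟨p0, hp0, ho0⟩ := BTree.leaf_path t i hi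
  have hlb0 : t.LBOcc p0 := ⟨BTree.leaf, hp0, trivial⟩
  have hip0 : i ∈ t.span p0 := by
    rw [BTree.span_eq t p0 BTree.leaf hp0, ho0]
    simp [BTree.leafCount]
  have hne : 𝒮.Nonempty := ⟨t.span p0, mem𝒮 p0 hlb0 hip0⟩
  obtain ⟨S, hS, hmax⟩ := Finset.exists_max_image 𝒮 Finset.card hne
  simp only [h𝒮, Finset.mem_filter, Finset.mem_powerset] at hS
  obtain ⟨-, ⟨p, hpLB, hpS⟩, hiS⟩ := hS
  -- p is a maximal LB occurrence
  have hmaxp : t.MaxLB p := by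
    refine ⟨hpLB, fun q hq hsub' => ?_⟩
    have hiq : i ∈ t.span q := hsub' (hpS ▸ hiS)
    have hq𝒮 := mem𝒮 q hq hiq
    have := hmax _ hq𝒮
    rw [hpS]
    exact Finset.eq_of_subset_of_card_le (hpS ▸ hsub') (by omega)
  -- uniqueness: two maximal LB spans containing i coincide
  refine ⟨S, ⟨⟨p, hmaxp, hpS⟩, hiS⟩, ?_⟩
  rintro T ⟨⟨q, ⟨hqLB, hqmax⟩, hqT⟩, hiT⟩
  obtain ⟨sq, hsq, hlbq⟩ := hqLB
  obtain ⟨sp, hsp, hlbp⟩ := hmaxp.1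
  have hiq : i ∈ t.span q := hqT ▸ hiT
  have hip : i ∈ t.span p := hpS ▸ hiS
  rw [BTree.span_eq t q sq hsq, Finset.mem_Ico] at hiq
  rw [BTree.span_eq t p sp hsp, Finset.mem_Ico] at hip
  have hnest := BTree.nest t p q sp sq hsp hsq
  have key : t.span p = t.span q := by
    rcases hnest with h | h | ⟨h1, h2⟩ | ⟨h1, h2⟩
    · omega
    · omega
    · exact hmaxp.2 q ⟨sq, hsq, hlbq⟩
        (by rw [BTree.span_eq t q sq hsq, BTree.span_eq t p sp hsp]
            exact Finset.Ico_subset_Ico h1 h2)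
    · exact (hqmax p ⟨sp, hsp, hlbp⟩
        (by rw [BTree.span_eq t q sq hsq, BTree.span_eq t p sp hsp]
            exact Finset.Ico_subset_Ico h1 h2)).symm
  rw [← hqT, ← hpS, key]
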